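/- arXiv:2501.17061 — 2 statements merged into one kernel-verified Lean document; each statement's English description precedes it below -/
import Mathlib

section
/- Let ψ = Σ_{i=0}^{2ⁿ−1} r_i |i⟩ with all r_i real and nonnegative (all phases zero), and let ψ' = Σ_{i} r_i e^{iφ'_i} |i⟩ be any pure state with the same computational-basis probabilities. If ψ' also produces the same outcome probabilities as ψ when measured in the basis {H^{⊗n}|i⟩}, then e^{iφ'_s} = e^{iφ'_l} whenever r_s r_l ≠ 0; in particular ψ' equals ψ up to a global phase. -/
/-!
Only the outcome `0` of the Hadamard measurement is needed. The column of `H^{⊗n}` at `0` is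
the constant `2^{-n/2}`, so that outcome has amplitude proportional to `∑ r_k e^{iφ'_k}` for `ψ'`
and to `∑ r_k` for `ψ`. Equal probabilities thus say `‖∑ r_k e^{iφ'_k}‖ = ∑ r_k = ∑ ‖r_k e^{iφ'_k}‖`,
the equality case of the triangle inequality, which forces all nonzero terms onto one ray.
-/

open BigOperators

/-- Entrywise form of the n-fold tensor power of the Hadamard matrix. -/
noncomputable def Hpow (n : ℕ) : Matrix (Fin (2 ^ n)) (Fin (2 ^ n)) ℂ := fun j k =>
  ∏ m ∈ Finset.range n,
    ((1 / Real.sqrt 2 : ℝ) : ℂ) * (if (j : ℕ).testBit m ∧ (k : ℕ).testBit m then -1 else 1)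

open ComplexConjugate

namespace Complex

open scoped ComplexOrder

theorem exists_norm_eq_one_forall_eq_mul_norm_of_norm_sum_eq {ι : Type*} {s : Finset ι}
    {z : ι → ℂ} (h : ‖∑ i ∈ s, z i‖ = ∑ i ∈ s, ‖z i‖) :
    ∃ c : ℂ, ‖c‖ = 1 ∧ ∀ i ∈ s, z i = c * ‖z i‖ := by
  set T := ∑ i ∈ s, z i
  by_cases hT : T = 0
  · refine ⟨1, norm_one, fun i hi => ?_⟩
    rw [hT, norm_zero, eq_comm, Finset.sum_eq_zero_iff_of_nonneg fun i _ => norm_nonneg _] at h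
    simp [norm_eq_zero.mp (h i hi)]
  -- `Re (conj c * z i) ≤ ‖z i‖` for the direction `c` of the sum, with equality after summing.
  set c := T / ‖T‖
  have hc : ‖c‖ = 1 := by simp [c, hT]
  have hcc : c * conj c = 1 := by rw [mul_conj', hc]; norm_num
  have hcT : conj c * T = ‖T‖ := by
    have : (‖T‖ : ℂ) ≠ 0 := by simpa using hT
    simp only [c, map_div₀, conj_ofReal]
    rw [div_mul_eq_mul_div, mul_comm, mul_conj', div_eq_iff this]; ring
  have hle : ∀ i ∈ s, (conj c * z i).re ≤ ‖z i‖ := fun i _ => by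
    simpa [hc] using re_le_norm (conj c * z i)
  have hsum : ∑ i ∈ s, (conj c * z i).re = ∑ i ∈ s, ‖z i‖ := by
    rw [← re_sum, ← Finset.mul_sum, hcT, ofReal_re, h]
  refine ⟨c, hc, fun i hi => ?_⟩
  have hre : (conj c * z i).re = ‖conj c * z i‖ := by
    simpa [hc] using (Finset.sum_eq_sum_iff_of_le hle).mp hsum i hi
  have hreal : conj c * z i = ‖z i‖ := by
    have hnonneg : ((0 : ℝ) : ℂ) ≤ conj c * z i := by simpa using re_eq_norm.mp hre
    rw [eq_re_of_ofReal_le hnonneg, hre]; simp [hc]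
  calc z i = c * conj c * z i := by rw [hcc, one_mul]
    _ = c * ‖z i‖ := by rw [mul_assoc, hreal]

end Complex

theorem Hpow_apply_zero (n : ℕ) (k : Fin (2 ^ n)) :
    Hpow n k ⟨0, Nat.two_pow_pos n⟩ = (((1 / Real.sqrt 2) ^ n : ℝ) : ℂ) := by
  simp [Hpow, Nat.zero_testBit]

theorem norm_sum_conj_Hpow_zero_mul (n : ℕ) (v : Fin (2 ^ n) → ℂ) :
    ‖∑ k, conj (Hpow n k ⟨0, Nat.two_pow_pos n⟩) * v k‖ = (1 / Real.sqrt 2) ^ n * ‖∑ k, v k‖ := by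
  simp only [Hpow_apply_zero, Complex.conj_ofReal, ← Finset.mul_sum, norm_mul, Complex.norm_real,
    Real.norm_eq_abs]
  rw [abs_of_pos (by positivity)]

theorem stmt_6_general (n : ℕ) (r : Fin (2 ^ n) → ℝ) (φ' : Fin (2 ^ n) → ℝ)
    (hr : ∀ i, 0 ≤ r i)
    (hmeas : ∀ j : Fin (2 ^ n),
      ‖(∑ k, (starRingEnd ℂ) (Hpow n k j) *
          ((r k : ℂ) * Complex.exp (Complex.I * (φ' k : ℂ))))‖ =
      ‖(∑ k, (starRingEnd ℂ) (Hpow n k j) * (r k : ℂ))‖) :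
    (∀ s l, r s * r l ≠ 0 →
        Complex.exp (Complex.I * (φ' s : ℂ)) = Complex.exp (Complex.I * (φ' l : ℂ))) ∧
    ∃ c : ℂ, ‖c‖ = 1 ∧
      ∀ i, (r i : ℂ) * Complex.exp (Complex.I * (φ' i : ℂ)) = c * (r i : ℂ) := by
  have habs : ∀ k, ‖(r k : ℂ) * Complex.exp (Complex.I * (φ' k : ℂ))‖ = r k := fun k => by
    rw [norm_mul, Complex.norm_exp_I_mul_ofReal, mul_one, Complex.norm_real,
      Real.norm_of_nonneg (hr k)]
  have hsum : ‖∑ k, (r k : ℂ) * Complex.exp (Complex.I * (φ' k : ℂ))‖ = ∑ k, r k := by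
    have h0 := hmeas ⟨0, Nat.two_pow_pos n⟩
    rw [norm_sum_conj_Hpow_zero_mul, norm_sum_conj_Hpow_zero_mul,
      mul_right_inj' (by positivity), ← Complex.ofReal_sum, Complex.norm_real,
      Real.norm_of_nonneg (Finset.sum_nonneg fun k _ => hr k)] at h0
    exact h0
  obtain ⟨c, hc, hray⟩ :=
    Complex.exists_norm_eq_one_forall_eq_mul_norm_of_norm_sum_eq (hsum.trans (by simp only [habs]))
  have hray' : ∀ i, (r i : ℂ) * Complex.exp (Complex.I * (φ' i : ℂ)) = c * (r i : ℂ) := fun i => by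
    simpa only [habs] using hray i (Finset.mem_univ i)
  have hphase : ∀ i, r i ≠ 0 → Complex.exp (Complex.I * (φ' i : ℂ)) = c := fun i hi =>
    mul_left_cancel₀ (Complex.ofReal_ne_zero.mpr hi) ((hray' i).trans (mul_comm _ _))
  refine ⟨fun s l hsl => ?_, c, hc, hray'⟩
  rw [hphase s (left_ne_zero_of_mul hsl), hphase l (right_ne_zero_of_mul hsl)]

/-- If ψ = Σ r_i|i⟩ has all nonnegative real amplitudes and ψ' = Σ r_i e^{iφ'_i}|i⟩ has the
same computational-basis probabilities and the same outcome probabilities in the basis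
{H^{⊗n}|i⟩}, then e^{iφ'_s} = e^{iφ'_l} whenever r_s r_l ≠ 0; in particular ψ' equals ψ up to
a global phase. -/
theorem stmt_6 (n : ℕ) (hn : 1 ≤ n) (r : Fin (2 ^ n) → ℝ) (φ' : Fin (2 ^ n) → ℝ)
    (hr : ∀ i, 0 ≤ r i) (hnorm : ∑ i, r i ^ 2 = 1)
    (hmeas : ∀ j : Fin (2 ^ n),
      ‖(∑ k, (starRingEnd ℂ) (Hpow n k j) *
          ((r k : ℂ) * Complex.exp (Complex.I * (φ' k : ℂ))))‖ =
      ‖(∑ k, (starRingEnd ℂ) (Hpow n k j) * (r k : ℂ))‖) :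
    (∀ s l, r s * r l ≠ 0 →
        Complex.exp (Complex.I * (φ' s : ℂ)) = Complex.exp (Complex.I * (φ' l : ℂ))) ∧
    ∃ c : ℂ, ‖c‖ = 1 ∧
      ∀ i, (r i : ℂ) * Complex.exp (Complex.I * (φ' i : ℂ)) = c * (r i : ℂ) :=
  stmt_6_general n r φ' hr hmeas
end

section
/- Square roots of distinct primes are linearly independent over ℚ: if q₁, …, qₙ are distinct primes and c₁, …, cₙ ∈ ℚ satisfy Σ cₖ √(qₖ) = 0, then all cₖ = 0. -/
open BigOperators Real

/-- The set `{a + b*x : a b ∈ K}` is a subfield when `x² ∈ K` and `x ∉ K`. -/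
noncomputable def quadExt (K : Subfield ℝ) (x : ℝ) (hx2 : x ^ 2 ∈ K) (hx : x ∉ K) : Subfield ℝ where
  carrier := {y | ∃ a ∈ K, ∃ b ∈ K, y = a + b * x}
  one_mem' := ⟨1, K.one_mem, 0, K.zero_mem, by ring⟩
  zero_mem' := ⟨0, K.zero_mem, 0, K.zero_mem, by ring⟩
  add_mem' := by
    rintro y z ⟨a, ha, b, hb, rfl⟩ ⟨c, hc, d, hd, rfl⟩
    exact ⟨a + c, K.add_mem ha hc, b + d, K.add_mem hb hd, by ring⟩
  neg_mem' := by
    rintro y ⟨a, ha, b, hb, rfl⟩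
    exact ⟨-a, K.neg_mem ha, -b, K.neg_mem hb, by ring⟩
  mul_mem' := by
    rintro y z ⟨a, ha, b, hb, rfl⟩ ⟨c, hc, d, hd, rfl⟩
    exact ⟨a * c + b * d * x ^ 2, K.add_mem (K.mul_mem ha hc) (K.mul_mem (K.mul_mem hb hd) hx2),
      a * d + b * c, K.add_mem (K.mul_mem ha hd) (K.mul_mem hb hc), by ring⟩
  inv_mem' := by
    rintro y ⟨a, ha, b, hb, rfl⟩
    rcases eq_or_ne (a + b * x) 0 with h0 | h0
    · exact ⟨0, K.zero_mem, 0, K.zero_mem, by rw [h0]; simp⟩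
    · have hN : a ^ 2 - b ^ 2 * x ^ 2 ≠ 0 := by
        intro hN
        rcases eq_or_ne b 0 with hb0 | hb0
        · apply h0; rw [hb0] at hN ⊢
          have : a = 0 := by nlinarith [sq_nonneg a]
          simp [this]
        · apply hx
          have : (x - a / b) * (x + a / b) = 0 := by field_simp; nlinarith
          rcases mul_eq_zero.1 this with h | h
          · have : x = a / b := by linarith
            rw [this]; exact K.div_mem ha hb
          · have : x = -(a / b) := by linarith
            rw [this]; exact K.neg_mem (K.div_mem ha hb)
      refine ⟨a / (a ^ 2 - b ^ 2 * x ^ 2),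
        K.div_mem ha (K.sub_mem (K.pow_mem ha 2) (K.mul_mem (K.pow_mem hb 2) hx2)),
        -b / (a ^ 2 - b ^ 2 * x ^ 2),
        K.div_mem (K.neg_mem hb) (K.sub_mem (K.pow_mem ha 2) (K.mul_mem (K.pow_mem hb 2) hx2)), ?_⟩
      field_simp
      ring

theorem quadExt_sq_mem {K : Subfield ℝ} {x : ℝ} (hx2 : x ^ 2 ∈ K) (hx : x ∉ K) {e : ℝ}
    (he : e ∈ quadExt K x hx2 hx) (he2 : e ^ 2 ∈ K) : e ∈ K ∨ e * x ∈ K := by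
  obtain ⟨a, ha, b, hb, rfl⟩ := he
  have hK : 2 * a * b * x = (a + b * x) ^ 2 - a ^ 2 - b ^ 2 * x ^ 2 := by ring
  have hmem : 2 * a * b * x ∈ K := by
    rw [hK]
    exact K.sub_mem (K.sub_mem he2 (K.pow_mem ha 2)) (K.mul_mem (K.pow_mem hb 2) hx2)
  rcases eq_or_ne a 0 with ha0 | ha0
  · right
    rw [ha0, zero_add, mul_assoc, ← sq]
    exact K.mul_mem hb hx2
  rcases eq_or_ne b 0 with hb0 | hb0
  · left; rw [hb0]; simpa using ha
  exfalso; apply hx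
  have h2 : (2:ℝ) ∈ K := by exact_mod_cast natCast_mem K 2
  have : x = (2 * a * b)⁻¹ * (2 * a * b * x) := by field_simp
  rw [this]
  exact K.mul_mem (K.inv_mem (K.mul_mem (K.mul_mem h2 ha) hb)) hmem

/-- field generated by square roots of a finite set of naturals -/
noncomputable def Ksf (s : Finset ℕ) : Subfield ℝ :=
  Subfield.closure {x | ∃ p ∈ s, x = Real.sqrt p}

theorem sqrt_not_mem_Ksf : ∀ s : Finset ℕ, (∀ p ∈ s, Nat.Prime p) →
    ∀ d : ℕ, Squarefree d → 1 < d → (∀ p ∈ s, ¬ p ∣ d) → Real.sqrt d ∉ Ksf s := by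
  classical
  intro s
  induction s using Finset.induction_on with
  | empty =>
    intro _ d hsf hd _ hmem
    have hle : Ksf (∅ : Finset ℕ) ≤ (Rat.castHom ℝ).fieldRange := by
      apply Subfield.closure_le.2
      rintro x ⟨p, hp, -⟩
      exact absurd hp (Finset.notMem_empty p)
    obtain ⟨r, hr⟩ := hle hmem
    have hirr : Irrational (Real.sqrt d) := by
      rw [irrational_sqrt_natCast_iff]
      rintro ⟨k, hk⟩
      have hu := hsf k (by rw [hk])
      have hk1 : k = 1 := Nat.isUnit_iff.1 hu
      rw [hk1] at hk
      omega
    exact hirr ⟨r, hr⟩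
  | @insert p s hpns ih =>
    intro hs d hsf hd hdvd hmem
    have hp : p.Prime := hs p (Finset.mem_insert_self p s)
    have hs' : ∀ r ∈ s, Nat.Prime r := fun r hr => hs r (Finset.mem_insert_of_mem hr)
    set x := Real.sqrt p with hxdef
    have hx2 : x ^ 2 ∈ Ksf s := by
      rw [Real.sq_sqrt (by positivity : ((p:ℝ)) ≥ 0)]
      exact_mod_cast natCast_mem (Ksf s) p
    have hx : x ∉ Ksf s := by
      apply ih hs' p hp.squarefree hp.one_lt
      intro r hr hrp
      exact hpns ((Nat.prime_dvd_prime_iff_eq (hs' r hr) hp).1 hrp ▸ hr)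
    have hle : Ksf (insert p s) ≤ quadExt (Ksf s) x hx2 hx := by
      apply Subfield.closure_le.2
      rintro y ⟨r, hr, rfl⟩
      rcases Finset.mem_insert.1 hr with rfl | hr'
      · exact ⟨0, (Ksf s).zero_mem, 1, (Ksf s).one_mem, by ring⟩
      · refine ⟨Real.sqrt r, ?_, 0, (Ksf s).zero_mem, by ring⟩
        exact Subfield.subset_closure ⟨r, hr', rfl⟩
    have hd2 : (Real.sqrt d) ^ 2 ∈ Ksf s := by
      rw [Real.sq_sqrt (by positivity : ((d:ℝ)) ≥ 0)]
      exact_mod_cast natCast_mem (Ksf s) d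
    rcases quadExt_sq_mem hx2 hx (hle hmem) hd2 with h | h
    · exact ih hs' d hsf hd (fun r hr => hdvd r (Finset.mem_insert_of_mem hr)) h
    · have hpd : ¬ p ∣ d := hdvd p (Finset.mem_insert_self p s)
      have hcop : Nat.Coprime d p := ((hp.coprime_iff_not_dvd).2 hpd).symm
      have hmul : Real.sqrt ((d * p : ℕ) : ℝ) ∈ Ksf s := by
        have heq : Real.sqrt ((d * p : ℕ) : ℝ) = Real.sqrt d * Real.sqrt p := by
          push_cast
          rw [Real.sqrt_mul (by positivity)]
        rw [heq]
        exact h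
      refine ih hs' (d * p) ((Nat.squarefree_mul hcop).2 ⟨hsf, hp.squarefree⟩)
        (by nlinarith [hp.one_lt]) ?_ hmul
      intro r hr hrdp
      have hrprime := hs' r hr
      rcases (Nat.Prime.dvd_mul hrprime).1 hrdp with h1 | h1
      · exact hdvd r (Finset.mem_insert_of_mem hr) h1
      · exact hpns ((Nat.prime_dvd_prime_iff_eq hrprime hp).1 h1 ▸ hr)

/-- Square roots of distinct primes are linearly independent over ℚ. -/
theorem stmt_16 (n : ℕ) (q : Fin n → ℕ) (hprime : ∀ k, (q k).Prime)
    (hinj : Function.Injective q) (c : Fin n → ℚ)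
    (hsum : ∑ k, (c k : ℝ) * Real.sqrt (q k) = 0) :
    ∀ k, c k = 0 := by
  classical
  intro j
  by_contra hcj
  set s : Finset ℕ := (Finset.univ.erase j).image q with hsdef
  have hsplit : (c j : ℝ) * Real.sqrt (q j)
      + ∑ k ∈ Finset.univ.erase j, (c k : ℝ) * Real.sqrt (q k) = 0 := by
    rw [← hsum]
    exact Finset.add_sum_erase Finset.univ (fun k => (c k : ℝ) * Real.sqrt (q k)) (Finset.mem_univ j)
  have hsummem : ∑ k ∈ Finset.univ.erase j, (c k : ℝ) * Real.sqrt (q k) ∈ Ksf s := by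
    apply Subfield.sum_mem
    intro k hk
    refine Subfield.mul_mem _ (SubfieldClass.ratCast_mem _ _) ?_
    exact Subfield.subset_closure ⟨q k, Finset.mem_image_of_mem q hk, rfl⟩
  have hcj' : ((c j : ℝ)) ≠ 0 := by exact_mod_cast hcj
  have hmem : Real.sqrt (q j) ∈ Ksf s := by
    have heq : Real.sqrt (q j)
        = (c j : ℝ)⁻¹ * (-(∑ k ∈ Finset.univ.erase j, (c k : ℝ) * Real.sqrt (q k))) := by
      field_simp
      linarith [hsplit]
    rw [heq]
    exact Subfield.mul_mem _ (Subfield.inv_mem _ (SubfieldClass.ratCast_mem _ _))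
      (Subfield.neg_mem _ hsummem)
  refine sqrt_not_mem_Ksf s ?_ (q j) (hprime j).squarefree (hprime j).one_lt ?_ hmem
  · intro r hr
    obtain ⟨k, -, rfl⟩ := Finset.mem_image.1 hr
    exact hprime k
  · intro r hr hdvd
    obtain ⟨k, hk, rfl⟩ := Finset.mem_image.1 hr
    have : q k = q j := (Nat.prime_dvd_prime_iff_eq (hprime k) (hprime j)).1 hdvd
    exact (Finset.ne_of_mem_erase hk) (hinj this)
end
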